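/- Let d ≥ 1, let μ_0 and μ_1 be probability distributions on ℝ, and let Z_{0,1},…,Z_{0,d},Z_{1,1},…,Z_{1,d} be mutually independent real random variables with Z_{0,j} ∼ μ_0 and Z_{1,j} ∼ μ_1 for all j, independent of a {0,1}^d-valued random vector I; analogously let Z'_{0,j} ∼ μ_0, Z'_{1,j} ∼ μ_1 be mutually independent and independent of a {0,1}^d-valued random vector I'. Set X_j = Z_{I_j,j} and X'_j = Z'_{I'_j,j}. If Σ_{j=1}^d I_j and Σ_{j=1}^d I'_j have the same distribution, then Σ_{j=1}^d X_j and Σ_{j=1}^d X'_j have the same distribution. -/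

import Mathlib

open MeasureTheory ProbabilityTheory Finset

lemma GFGM.map_pi_comp {γ δ : Type*} [Fintype γ] [Fintype δ] [DecidableEq δ]
    (g : γ → δ) (hg : Function.Injective g)
    (ν : δ → Measure ℝ) [∀ i, IsProbabilityMeasure (ν i)] :
    Measure.map (fun x : δ → ℝ => fun j => x (g j)) (Measure.pi ν)
      = Measure.pi (fun j => ν (g j)) := by
  refine (Measure.pi_eq fun s hs => ?_).symm
  rw [Measure.map_apply (measurable_pi_lambda (fun (x : δ → ℝ) j => x (g j)) fun j => measurable_pi_apply (g j))
    (MeasurableSet.univ_pi hs)]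
  have hpre : (fun x : δ → ℝ => fun j => x (g j)) ⁻¹' Set.pi Set.univ s
      = Set.pi Set.univ (fun i => ⋂ (j) (_ : g j = i), s j) := by
    ext x
    simp only [Set.mem_preimage, Set.mem_pi, Set.mem_univ, true_implies, Set.mem_iInter]
    constructor
    · rintro h i j rfl; exact h j
    · intro h j; exact h (g j) j rfl
  rw [hpre, Measure.pi_pi]
  have hF : ∀ j : γ, (⋂ (j') (_ : g j' = g j), s j') = s j := by
    intro j
    apply Set.Subset.antisymm
    · intro x hx; exact Set.mem_iInter₂.1 hx j rfl
    · intro x hx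
      refine Set.mem_iInter₂.2 fun j' h => ?_
      rw [hg h]; exact hx
  calc ∏ i, ν i (⋂ (j) (_ : g j = i), s j)
      = ∏ i ∈ Finset.univ.image g, ν i (⋂ (j) (_ : g j = i), s j) := by
        refine (Finset.prod_subset (Finset.subset_univ _) fun i _ hi => ?_).symm
        have he : (⋂ (j) (_ : g j = i), s j) = Set.univ := by
          ext x
          simp only [Set.mem_iInter, Set.mem_univ, iff_true]
          intro j hj
          exact absurd (Finset.mem_image.2 ⟨j, Finset.mem_univ j, hj⟩) hi
        rw [he, measure_univ]
    _ = ∏ j, ν (g j) (⋂ (j') (_ : g j' = g j), s j') :=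
        Finset.prod_image (fun a _ b _ h => hg h)
    _ = ∏ j, ν (g j) (s j) := Finset.prod_congr rfl fun j _ => by rw [hF j]

lemma GFGM.law_pi {α Ω : Type*} [Fintype α] [MeasurableSpace Ω]
    (μ : Measure Ω) [IsProbabilityMeasure μ]
    (Z : α → Ω → ℝ) (hZm : ∀ i, Measurable (Z i))
    (h : iIndepFun Z μ) :
    Measure.map (fun ω => fun i => Z i ω) μ = Measure.pi (fun i => Measure.map (Z i) μ) := by
  haveI : ∀ i, IsProbabilityMeasure (Measure.map (Z i) μ) :=
    fun i => Measure.isProbabilityMeasure_map (hZm i).aemeasurable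
  refine (Measure.pi_eq fun s hs => ?_).symm
  rw [Measure.map_apply (measurable_pi_lambda (fun ω i => Z i ω) hZm)
    (MeasurableSet.univ_pi hs)]
  have hpre : (fun ω => fun i => Z i ω) ⁻¹' Set.pi Set.univ s = ⋂ i ∈ Finset.univ, Z i ⁻¹' s i := by
    ext ω; simp [Set.mem_pi]
  rw [hpre, h.measure_inter_preimage_eq_mul Finset.univ (fun i _ => hs i)]
  exact Finset.prod_congr rfl fun i _ => (Measure.map_apply (hZm i) (hs i)).symm

lemma GFGM.exists_perm {d : ℕ} (ι : Fin d → Bool) :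
    ∃ σ : Equiv.Perm (Fin d),
      ∀ j, (((σ j : ℕ) < ∑ i, if ι i then 1 else 0) ↔ ι j = true) := by
  set k := ∑ i, (if ι i then 1 else 0) with hk
  have hcard_q : Fintype.card {j : Fin d // ι j = true} = k := by
    rw [Fintype.card_subtype, Finset.card_filter, hk]
  have hkd : k ≤ d := by
    rw [hk]
    calc (∑ i, if ι i then 1 else 0) ≤ ∑ _i : Fin d, 1 :=
          Finset.sum_le_sum (fun i _ => by split <;> simp)
      _ = d := by simp
  have hcard_p : Fintype.card {j : Fin d // (j : ℕ) < k} = k := by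
    refine (Fintype.card_congr
      ⟨fun x => (⟨x.1, x.2⟩ : Fin k),
       fun i => ⟨⟨i.1, lt_of_lt_of_le i.2 hkd⟩, i.2⟩,
       fun x => Subtype.ext (Fin.ext rfl), fun i => rfl⟩).trans (Fintype.card_fin k)
  obtain ⟨e⟩ := Fintype.card_eq.1 (hcard_q.trans hcard_p.symm)
  obtain ⟨f⟩ := Fintype.card_eq.1 (by
    rw [Fintype.card_subtype_compl, Fintype.card_subtype_compl, hcard_q, hcard_p] :
    Fintype.card {j : Fin d // ¬ (ι j = true)} = Fintype.card {j : Fin d // ¬ ((j : ℕ) < k)})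
  refine ⟨Equiv.subtypeCongr e f, fun j => ?_⟩
  by_cases h : ι j = true
  · have : Equiv.subtypeCongr e f j = (e ⟨j, h⟩ : Fin d) := by
      simp [Equiv.subtypeCongr, h]
    rw [this]
    simpa [h] using (e ⟨j, h⟩).2
  · have : Equiv.subtypeCongr e f j = (f ⟨j, h⟩ : Fin d) := by
      simp [Equiv.subtypeCongr, h]
    rw [this]
    simpa [h] using (f ⟨j, h⟩).2

noncomputable def GFGM.nu (d : ℕ) (μ₀ μ₁ : Measure ℝ) (k : ℕ) : Measure ℝ :=
  Measure.map (fun x : Fin d → ℝ => ∑ j, x j)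
    (Measure.pi (fun j : Fin d => if (j : ℕ) < k then μ₁ else μ₀))

lemma GFGM.law_pattern {Ω : Type*} [MeasurableSpace Ω] (μ : Measure Ω) [IsProbabilityMeasure μ]
    {d : ℕ} (μ₀ μ₁ : Measure ℝ) [IsProbabilityMeasure μ₀] [IsProbabilityMeasure μ₁]
    (Z : Bool × Fin d → Ω → ℝ) (hZm : ∀ i, Measurable (Z i))
    (hZindep : iIndepFun Z μ)
    (hZ0 : ∀ j, Measure.map (Z (false, j)) μ = μ₀)
    (hZ1 : ∀ j, Measure.map (Z (true, j)) μ = μ₁)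
    (ι : Fin d → Bool) :
    Measure.map (fun ω => ∑ j, Z (ι j, j) ω) μ
      = GFGM.nu d μ₀ μ₁ (∑ j, if ι j then 1 else 0) := by
  haveI : ∀ p : Bool × Fin d, IsProbabilityMeasure ((fun p : Bool × Fin d =>
      if p.1 then μ₁ else μ₀) p) := by
    rintro ⟨b, j⟩; cases b <;> simp <;> infer_instance
  set k := ∑ j, (if ι j then 1 else 0) with hk
  have hlam : (fun p : Bool × Fin d => Measure.map (Z p) μ)
      = fun p : Bool × Fin d => if p.1 then μ₁ else μ₀ := by
    funext p; rcases p with ⟨b, j⟩; cases b <;> simp [hZ0 j, hZ1 j]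
  have hsummeas : Measurable (fun x : Fin d → ℝ => ∑ j, x j) :=
    Finset.univ.measurable_sum (fun j _ => measurable_pi_apply j)
  have hprojmeas : Measurable (fun x : Bool × Fin d → ℝ => fun j => x (ι j, j)) :=
    measurable_pi_lambda _ fun j => measurable_pi_apply _
  have h1 : (fun ω => ∑ j, Z (ι j, j) ω)
      = (fun x : Fin d → ℝ => ∑ j, x j) ∘
        ((fun x : Bool × Fin d → ℝ => fun j => x (ι j, j)) ∘ (fun ω p => Z p ω)) := rfl
  rw [h1, ← Measure.map_map hsummeas (hprojmeas.comp (measurable_pi_lambda _ hZm)),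
    ← Measure.map_map hprojmeas (measurable_pi_lambda _ hZm),
    GFGM.law_pi μ Z hZm hZindep, hlam,
    GFGM.map_pi_comp (fun j : Fin d => ((ι j, j) : Bool × Fin d))
      (fun a b h => (Prod.mk.injEq _ _ _ _ ▸ h).2) _]
  obtain ⟨σ, hσ⟩ := GFGM.exists_perm ι
  haveI : ∀ j : Fin d, IsProbabilityMeasure ((fun j : Fin d =>
      if (j : ℕ) < k then μ₁ else μ₀) j) := by
    intro j; simp only; split <;> infer_instance
  have h2 : (fun j : Fin d => if ι j then μ₁ else μ₀)
      = fun j => (fun i : Fin d => if (i : ℕ) < k then μ₁ else μ₀) (σ j) := by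
    funext j
    by_cases h : ι j = true <;> simp [h, (show ((σ j : ℕ) < k ↔ ι j = true) from hσ j)]
  rw [show (fun j : Fin d => if (ι j, j).1 then μ₁ else μ₀)
      = (fun j : Fin d => if ι j then μ₁ else μ₀) from rfl, h2,
    ← GFGM.map_pi_comp (fun j => σ j) σ.injective
      (fun i : Fin d => if (i : ℕ) < k then μ₁ else μ₀),
    Measure.map_map hsummeas (measurable_pi_lambda _ fun j => measurable_pi_apply _)]
  have h3 : ((fun x : Fin d → ℝ => ∑ j, x j) ∘ (fun x : Fin d → ℝ => fun j => x (σ j)))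
      = fun x : Fin d → ℝ => ∑ j, x j := by
    funext x
    exact Equiv.sum_comp σ x
  rw [h3]
  rfl


lemma GFGM.side {Ω : Type*} [MeasurableSpace Ω] (μ : Measure Ω) [IsProbabilityMeasure μ]
    {d : ℕ} (μ₀ μ₁ : Measure ℝ) [IsProbabilityMeasure μ₀] [IsProbabilityMeasure μ₁]
    (Z : Bool × Fin d → Ω → ℝ) (hZm : ∀ i, Measurable (Z i))
    (hZindep : iIndepFun Z μ)
    (hZ0 : ∀ j, Measure.map (Z (false, j)) μ = μ₀)
    (hZ1 : ∀ j, Measure.map (Z (true, j)) μ = μ₁)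
    (I : Ω → Fin d → Bool) (hIm : Measurable I)
    (hZI : IndepFun (fun ω => fun i => Z i ω) I μ) :
    Measure.map (fun ω => ∑ j, Z (I ω j, j) ω) μ
      = ∑ k ∈ Finset.range (d + 1),
          ((Measure.map (fun ω => ∑ j, (if I ω j then (1 : ℕ) else 0)) μ) {k})
            • GFGM.nu d μ₀ μ₁ k := by
  have hFm : Measurable (fun ω => ∑ j, Z (I ω j, j) ω) := by
    have hG : Measurable (fun q : (Bool × Fin d → ℝ) × (Fin d → Bool) => ∑ j, q.1 (q.2 j, j)) := by
      refine measurable_from_prod_countable_left fun ι => ?_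
      have : ∀ j : Fin d, Measurable (fun x : Bool × Fin d → ℝ => x (ι j, j)) :=
        fun j => measurable_pi_apply _
      exact Finset.univ.measurable_sum fun j _ => this j
    exact hG.comp ((measurable_pi_lambda _ hZm).prodMk hIm)
  have hAm : ∀ ι : Fin d → Bool, Measurable (fun ω => ∑ j, Z (ι j, j) ω) :=
    fun ι => Finset.univ.measurable_sum fun j _ => hZm _
  have hbool : Measurable (fun b : Bool => if b then (1 : ℕ) else 0) := measurable_of_countable _
  have hcnt : Measurable (fun ω => ∑ j, (if I ω j then (1 : ℕ) else 0)) :=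
    Finset.univ.measurable_sum fun j _ => hbool.comp ((measurable_pi_apply j).comp hIm)
  have hle : ∀ ι : Fin d → Bool, (∑ j, if ι j then (1 : ℕ) else 0) ≤ d := by
    intro ι
    calc (∑ j, if ι j then (1 : ℕ) else 0) ≤ ∑ _j : Fin d, 1 :=
          Finset.sum_le_sum (fun j _ => by split <;> simp)
      _ = d := by simp
  refine Measure.ext fun s hs => ?_
  rw [Measure.map_apply hFm hs]
  have hsplit : (fun ω => ∑ j, Z (I ω j, j) ω) ⁻¹' s
      = ⋃ ι ∈ (Finset.univ : Finset (Fin d → Bool)),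
          (I ⁻¹' {ι} ∩ (fun ω => ∑ j, Z (ι j, j) ω) ⁻¹' s) := by
    ext ω
    simp only [Set.mem_preimage, Set.mem_iUnion, Finset.mem_univ, Set.mem_inter_iff,
      Set.mem_singleton_iff, exists_prop, true_and]
    constructor
    · intro h; exact ⟨I ω, rfl, h⟩
    · rintro ⟨ι, rfl, h⟩; exact h
  have hdisj : ((Finset.univ : Finset (Fin d → Bool)) : Set (Fin d → Bool)).PairwiseDisjoint
      (fun ι => I ⁻¹' {ι} ∩ (fun ω => ∑ j, Z (ι j, j) ω) ⁻¹' s) := by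
    intro ι _ ι' _ hne
    refine Set.disjoint_left.2 ?_
    rintro ω ⟨h1, -⟩ ⟨h2, -⟩
    exact hne ((Set.mem_singleton_iff.1 h1).symm.trans (Set.mem_singleton_iff.1 h2))
  rw [hsplit, measure_biUnion_finset hdisj
    (fun ι _ => (hIm (measurableSet_singleton ι)).inter ((hAm ι) hs))]
  have hterm : ∀ ι : Fin d → Bool,
      μ (I ⁻¹' {ι} ∩ (fun ω => ∑ j, Z (ι j, j) ω) ⁻¹' s)
        = μ (I ⁻¹' {ι}) * GFGM.nu d μ₀ μ₁ (∑ j, if ι j then 1 else 0) s := by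
    intro ι
    have hsm : Measurable (fun x : Bool × Fin d → ℝ => ∑ j, x (ι j, j)) := by
      have : ∀ j : Fin d, Measurable (fun x : Bool × Fin d → ℝ => x (ι j, j)) :=
        fun j => measurable_pi_apply _
      exact Finset.univ.measurable_sum fun j _ => this j
    have hB : MeasurableSet ((fun x : Bool × Fin d → ℝ => ∑ j, x (ι j, j)) ⁻¹' s) := hsm hs
    have heq : (fun ω => ∑ j, Z (ι j, j) ω) ⁻¹' s
        = (fun ω => fun p => Z p ω) ⁻¹'
            ((fun x : Bool × Fin d → ℝ => ∑ j, x (ι j, j)) ⁻¹' s) := rfl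
    rw [Set.inter_comm, heq,
      hZI.measure_inter_preimage_eq_mul _ _ hB (measurableSet_singleton ι), mul_comm]
    congr 1
    rw [← GFGM.law_pattern μ μ₀ μ₁ Z hZm hZindep hZ0 hZ1 ι, Measure.map_apply (hAm ι) hs]
    exact congrArg μ heq.symm
  have hcoef : ∀ k : ℕ,
      (Measure.map (fun ω => ∑ j, (if I ω j then (1 : ℕ) else 0)) μ) {k}
        = ∑ ι ∈ Finset.univ.filter
            (fun ι : Fin d → Bool => (∑ j, if ι j then (1 : ℕ) else 0) = k),
            μ (I ⁻¹' {ι}) := by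
    intro k
    rw [Measure.map_apply hcnt (measurableSet_singleton k)]
    have hpre : (fun ω => ∑ j, (if I ω j then (1 : ℕ) else 0)) ⁻¹' {k}
        = ⋃ ι ∈ Finset.univ.filter
            (fun ι : Fin d → Bool => (∑ j, if ι j then (1 : ℕ) else 0) = k),
            I ⁻¹' {ι} := by
      ext ω
      simp only [Set.mem_preimage, Set.mem_singleton_iff, Set.mem_iUnion, Finset.mem_filter,
        Finset.mem_univ, true_and, exists_prop]
      constructor
      · intro h; exact ⟨I ω, h, rfl⟩
      · rintro ⟨ι, hι, rfl⟩; exact hι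
    rw [hpre, measure_biUnion_finset ?_ (fun ι _ => hIm (measurableSet_singleton ι))]
    intro ι _ ι' _ hne
    refine Set.disjoint_left.2 ?_
    intro ω h1 h2
    exact hne ((Set.mem_singleton_iff.1 h1).symm.trans (Set.mem_singleton_iff.1 h2))
  calc ∑ ι : Fin d → Bool, μ (I ⁻¹' {ι} ∩ (fun ω => ∑ j, Z (ι j, j) ω) ⁻¹' s)
      = ∑ ι : Fin d → Bool, μ (I ⁻¹' {ι}) * GFGM.nu d μ₀ μ₁ (∑ j, if ι j then 1 else 0) s :=
        Finset.sum_congr rfl fun ι _ => hterm ι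
    _ = ∑ k ∈ Finset.range (d + 1), ∑ ι ∈ Finset.univ.filter
          (fun ι : Fin d → Bool => (∑ j, if ι j then (1 : ℕ) else 0) = k),
          μ (I ⁻¹' {ι}) * GFGM.nu d μ₀ μ₁ (∑ j, if ι j then 1 else 0) s :=
        (Finset.sum_fiberwise_of_maps_to
          (fun ι _ => Finset.mem_range.2 (Nat.lt_succ_of_le (hle ι))) _).symm
    _ = ∑ k ∈ Finset.range (d + 1),
          (∑ ι ∈ Finset.univ.filter
            (fun ι : Fin d → Bool => (∑ j, if ι j then (1 : ℕ) else 0) = k),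
            μ (I ⁻¹' {ι})) * GFGM.nu d μ₀ μ₁ k s := by
        refine Finset.sum_congr rfl fun k _ => ?_
        rw [Finset.sum_mul]
        exact Finset.sum_congr rfl fun ι hι => by rw [(Finset.mem_filter.1 hι).2]
    _ = (∑ k ∈ Finset.range (d + 1),
          ((Measure.map (fun ω => ∑ j, (if I ω j then (1 : ℕ) else 0)) μ) {k})
            • GFGM.nu d μ₀ μ₁ k) s := by
        rw [Measure.finset_sum_apply]
        exact Finset.sum_congr rfl fun k _ => by
          rw [Measure.smul_apply, smul_eq_mul, hcoef k]


/-- with identical margins (`Z_{0,j} ∼ μ₀`, `Z_{1,j} ∼ μ₁`, all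
mutually independent and independent of `I`), if the Bernoulli sums `Σ I_j` and
`Σ I'_j` have the same distribution then the sums `Σ Z_{I_j,j}` and `Σ Z'_{I'_j,j}`
have the same distribution. -/
theorem gfgm_margins_sum_eq_distrib_of_bernoulli_sum_eq
    {Ω : Type*} [MeasurableSpace Ω] (μ : Measure Ω) [IsProbabilityMeasure μ]
    {Ω' : Type*} [MeasurableSpace Ω'] (μ' : Measure Ω') [IsProbabilityMeasure μ']
    (d : ℕ) (hd : 1 ≤ d)
    (μ₀ μ₁ : Measure ℝ) [IsProbabilityMeasure μ₀] [IsProbabilityMeasure μ₁]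
    (Z : Bool × Fin d → Ω → ℝ) (hZm : ∀ i, Measurable (Z i))
    (hZindep : iIndepFun Z μ)
    (hZ0 : ∀ j, Measure.map (Z (false, j)) μ = μ₀)
    (hZ1 : ∀ j, Measure.map (Z (true, j)) μ = μ₁)
    (I : Ω → Fin d → Bool) (hIm : Measurable I)
    (hZI : IndepFun (fun ω => fun i => Z i ω) I μ)
    (Z' : Bool × Fin d → Ω' → ℝ) (hZ'm : ∀ i, Measurable (Z' i))
    (hZ'indep : iIndepFun Z' μ')
    (hZ'0 : ∀ j, Measure.map (Z' (false, j)) μ' = μ₀)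
    (hZ'1 : ∀ j, Measure.map (Z' (true, j)) μ' = μ₁)
    (I' : Ω' → Fin d → Bool) (hI'm : Measurable I')
    (hZ'I' : IndepFun (fun ω => fun i => Z' i ω) I' μ')
    (hsum : Measure.map (fun ω => ∑ j, (if I ω j then (1 : ℕ) else 0)) μ
      = Measure.map (fun ω => ∑ j, (if I' ω j then (1 : ℕ) else 0)) μ') :
    Measure.map (fun ω => ∑ j, Z (I ω j, j) ω) μ
      = Measure.map (fun ω => ∑ j, Z' (I' ω j, j) ω) μ' := by
  rw [GFGM.side μ μ₀ μ₁ Z hZm hZindep hZ0 hZ1 I hIm hZI,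
    GFGM.side μ' μ₀ μ₁ Z' hZ'm hZ'indep hZ'0 hZ'1 I' hI'm hZ'I', hsum]
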